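/- With α, β, γ as on ℍ^{m-1}×ℂ (α = i Σ dz_i∧d\bar{z}_i/(4y_i²), β = i(y_1⋯y_{m-1})dz_m∧d\bar{z}_m, γ = i Σ_{k,ℓ} dz_k∧d\bar{z}_ℓ/(4y_k y_ℓ)), the Chern-Ricci form of ω_OT = α + β + γ satisfies Ric(ω_OT) = -i∂\bar∂ log det(g_OT) = -α. -/

import Mathlib

/-!
Off the last row and column, `g_OT` is `D (I + J) D` with `D = diag (1 / (2 yᵢ))` and `J` the
all-ones matrix; the last row and column vanish except for the entry `y₁ ⋯ yₙ`. The matrix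
determinant lemma gives `det g_OT = (n + 1) 4⁻ⁿ ∏ yᵢ⁻¹`, so `log det g_OT = const - ∑ log yᵢ`.
On a function of `yᵢ = Im zᵢ` alone, `∂_{\bar ℓ}` and `∂_k` act as `δ_{ℓi} (i/2) d/dyᵢ` and
`-δ_{ki} (i/2) d/dyᵢ`, so `∂_k ∂_{\bar ℓ} (-log yᵢ) = δ_{ki} δ_{ℓi} / (4 yᵢ²)`: these are the
coefficients of `α`.
-/

open Finset

/-- The Wirtinger derivative `∂_k f = (∂_{x_k} f - i ∂_{y_k} f)/2`. -/
noncomputable def wD {n : ℕ} (k : Fin (n + 1)) (f : (Fin (n + 1) → ℂ) → ℂ)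
    (z : Fin (n + 1) → ℂ) : ℂ :=
  (fderiv ℝ f z (Pi.single k 1) - Complex.I * fderiv ℝ f z (Pi.single k Complex.I)) / 2

/-- The conjugate Wirtinger derivative `∂_{\bar k} f = (∂_{x_k} f + i ∂_{y_k} f)/2`. -/
noncomputable def wDbar {n : ℕ} (k : Fin (n + 1)) (f : (Fin (n + 1) → ℂ) → ℂ)
    (z : Fin (n + 1) → ℂ) : ℂ :=
  (fderiv ℝ f z (Pi.single k 1) + Complex.I * fderiv ℝ f z (Pi.single k Complex.I)) / 2

/-- The coefficient matrix of `ω_OT = α + β + γ` on `ℍ^n × ℂ`. -/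
noncomputable def otCoeff {n : ℕ} (z : Fin (n + 1) → ℂ) (k ℓ : Fin (n + 1)) : ℂ :=
  if k = Fin.last n then
    (if ℓ = Fin.last n then ∏ i : Fin n, ((z i.castSucc).im : ℂ) else 0)
  else if ℓ = Fin.last n then 0
  else (if k = ℓ then 1 / (4 * ((z k).im : ℂ) ^ 2) else 0) +
    1 / (4 * ((z k).im : ℂ) * ((z ℓ).im : ℂ))

/-- The coefficient matrix of `α = iΣ dz_i∧d\bar z_i/(4y_i²)` on `ℍ^n × ℂ`. -/
noncomputable def alphaCoeff {n : ℕ} (z : Fin (n + 1) → ℂ) (k ℓ : Fin (n + 1)) : ℂ :=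
  if k = ℓ ∧ ¬ k = Fin.last n then 1 / (4 * ((z k).im : ℂ) ^ 2) else 0

open Filter Topology

namespace Matrix

variable {R : Type*} [CommRing R]

theorem det_eq_mul_det_submatrix_castSucc_of_last_row {n : ℕ}
    (A : Matrix (Fin (n + 1)) (Fin (n + 1)) R) (h : ∀ j : Fin n, A (Fin.last n) j.castSucc = 0) :
    A.det = A (Fin.last n) (Fin.last n) * (A.submatrix Fin.castSucc Fin.castSucc).det := by
  rw [det_succ_row A (Fin.last n), Fin.sum_univ_castSucc]
  simp [h, Fin.succAbove_last, ← two_mul]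

theorem det_diagonal_mul_one_add_ones_mul_diagonal {m : Type*} [Fintype m] [DecidableEq m]
    (u : m → R) :
    (diagonal u * (1 + of fun _ _ => 1) * diagonal u).det =
      (1 + Fintype.card m) * (∏ i, u i) ^ 2 := by
  have hdet := det_one_add_replicateCol_mul_replicateRow (ι := Fin 1) (1 : m → R) 1
  rw [← vecMulVec_eq] at hdet
  have hones : vecMulVec (1 : m → R) (1 : m → R) = of fun _ _ => 1 := by ext; simp [vecMulVec]
  rw [det_mul, det_mul, det_diagonal, ← hones, hdet]
  simp only [dotProduct, Pi.one_apply, mul_one, sum_const, card_univ, nsmul_eq_mul]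
  ring

end Matrix

section Wirtinger

variable {n : ℕ} {f g : (Fin (n + 1) → ℂ) → ℂ} {z : Fin (n + 1) → ℂ}

theorem Filter.EventuallyEq.wD_eq (h : f =ᶠ[𝓝 z] g) (k : Fin (n + 1)) :
    wD k f z = wD k g z := by
  rw [wD, wD, h.fderiv_eq]

theorem Filter.EventuallyEq.wDbar_eq (h : f =ᶠ[𝓝 z] g) (k : Fin (n + 1)) :
    wDbar k f z = wDbar k g z := by
  rw [wDbar, wDbar, h.fderiv_eq]

theorem wDbar_const_add (c : ℂ) (k : Fin (n + 1)) :
    wDbar k (fun w => c + f w) z = wDbar k f z := by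
  rw [wDbar, wDbar, fderiv_const_add]

theorem wD_sum {ι : Type*} {s : Finset ι} {f : ι → (Fin (n + 1) → ℂ) → ℂ}
    (hf : ∀ i ∈ s, DifferentiableAt ℝ (f i) z) (k : Fin (n + 1)) :
    wD k (fun w => ∑ i ∈ s, f i w) z = ∑ i ∈ s, wD k (f i) z := by
  simp only [wD, fderiv_fun_sum hf, _root_.sum_apply, Finset.mul_sum, ← Finset.sum_sub_distrib,
    Finset.sum_div]

theorem wDbar_sum {ι : Type*} {s : Finset ι} {f : ι → (Fin (n + 1) → ℂ) → ℂ}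
    (hf : ∀ i ∈ s, DifferentiableAt ℝ (f i) z) (k : Fin (n + 1)) :
    wDbar k (fun w => ∑ i ∈ s, f i w) z = ∑ i ∈ s, wDbar k (f i) z := by
  simp only [wDbar, fderiv_fun_sum hf, _root_.sum_apply, Finset.mul_sum, ← Finset.sum_add_distrib,
    Finset.sum_div]

theorem hasFDerivAt_comp_im_apply {ι : Type*} [Fintype ι] {z : ι → ℂ} {φ : ℝ → ℂ} {φ' : ℂ}
    (j : ι) (h : HasDerivAt φ φ' (z j).im) :
    HasFDerivAt (fun w : ι → ℂ => φ (w j).im)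
      ((ContinuousLinearMap.smulRight (1 : ℝ →L[ℝ] ℝ) φ').comp
        (Complex.imCLM.comp (ContinuousLinearMap.proj j))) z :=
  h.hasFDerivAt.comp z
    (Complex.imCLM.comp (ContinuousLinearMap.proj (R := ℝ) (φ := fun _ : ι => ℂ) j)).hasFDerivAt

theorem wD_comp_im {φ : ℝ → ℂ} {φ' : ℂ} (j : Fin (n + 1)) (h : HasDerivAt φ φ' (z j).im)
    (k : Fin (n + 1)) :
    wD k (fun w => φ (w j).im) z = if k = j then -(Complex.I / 2) * φ' else 0 := by
  rw [wD, (hasFDerivAt_comp_im_apply j h).fderiv]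
  rcases eq_or_ne k j with rfl | hkj
  · simp only [ContinuousLinearMap.comp_apply, ContinuousLinearMap.proj_apply,
      Pi.single_eq_same, Complex.imCLM_apply, Complex.one_im, Complex.I_im,
      ContinuousLinearMap.smulRight_apply, one_apply_eq_self, zero_smul, one_smul,
      zero_sub, if_true]
    ring
  · simp [hkj, hkj.symm]

theorem wDbar_comp_im {φ : ℝ → ℂ} {φ' : ℂ} (j : Fin (n + 1)) (h : HasDerivAt φ φ' (z j).im)
    (k : Fin (n + 1)) :
    wDbar k (fun w => φ (w j).im) z = if k = j then Complex.I / 2 * φ' else 0 := by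
  rw [wDbar, (hasFDerivAt_comp_im_apply j h).fderiv]
  rcases eq_or_ne k j with rfl | hkj
  · simp only [ContinuousLinearMap.comp_apply, ContinuousLinearMap.proj_apply,
      Pi.single_eq_same, Complex.imCLM_apply, Complex.one_im, Complex.I_im,
      ContinuousLinearMap.smulRight_apply, one_apply_eq_self, zero_smul, one_smul,
      zero_add, if_true]
    ring
  · simp [hkj, hkj.symm]

end Wirtinger

section OTMetric

open Matrix

variable {n : ℕ} {z : Fin (n + 1) → ℂ}

theorem otCoeff_submatrix_castSucc :
    (of fun a b => otCoeff z a b).submatrix Fin.castSucc Fin.castSucc =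
      diagonal (fun i => (2 * ((z i.castSucc).im : ℂ))⁻¹) * (1 + of fun _ _ => 1) *
        diagonal (fun i => (2 * ((z i.castSucc).im : ℂ))⁻¹) := by
  ext i j
  simp only [otCoeff, submatrix_apply, of_apply, (Fin.castSucc_lt_last _).ne, if_false,
    Fin.castSucc_inj, mul_diagonal, diagonal_mul, Matrix.add_apply, one_apply]
  split_ifs with h
  · subst h
    ring
  · ring

theorem det_otCoeff :
    (of fun a b => otCoeff z a b).det =
      ((((n : ℝ) + 1) / 4 ^ n * ∏ i : Fin n, ((z i.castSucc).im)⁻¹ : ℝ) : ℂ) := by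
  rw [det_eq_mul_det_submatrix_castSucc_of_last_row _
      fun j => by simp [otCoeff, (Fin.castSucc_lt_last _).ne],
    otCoeff_submatrix_castSucc, det_diagonal_mul_one_add_ones_mul_diagonal]
  simp only [otCoeff, of_apply, if_true, Fintype.card_fin, mul_inv, Finset.prod_mul_distrib,
    Finset.prod_const, Finset.card_univ, Finset.prod_inv_distrib]
  push_cast
  set P := ∏ i : Fin n, ((z i.castSucc).im : ℂ)
  have hP : P * P⁻¹ ^ 2 = P⁻¹ := by simpa [sq, mul_assoc] using inv_mul_mul_self P⁻¹
  have h4 : (4 : ℂ) ^ n = (2 ^ n) ^ 2 := by rw [← pow_mul, mul_comm, pow_mul]; norm_num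
  rw [h4, inv_pow]
  linear_combination ((n + 1) / (2 ^ n) ^ 2 : ℂ) * hP

theorem log_det_otCoeff (hz : ∀ i : Fin n, 0 < (z i.castSucc).im) :
    Complex.log (of fun a b => otCoeff z a b).det =
      (Real.log (((n : ℝ) + 1) / 4 ^ n) : ℂ) + ∑ i : Fin n, -(Real.log (z i.castSucc).im : ℂ) := by
  have hprod : 0 < ∏ i : Fin n, ((z i.castSucc).im)⁻¹ :=
    Finset.prod_pos fun i _ => inv_pos.2 (hz i)
  rw [det_otCoeff, ← Complex.ofReal_log (by positivity), Real.log_mul (by positivity) hprod.ne',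
    Real.log_prod fun i _ => (inv_pos.2 (hz i)).ne']
  push_cast [Real.log_inv]
  rfl

theorem eventually_forall_im_pos (hz : ∀ i : Fin n, 0 < (z i.castSucc).im) :
    ∀ᶠ w in 𝓝 z, ∀ i : Fin n, 0 < (w i.castSucc).im :=
  eventually_all.2 fun i => continuousAt_const.eventually_lt
    (Complex.continuous_im.comp (continuous_apply _)).continuousAt (hz i)

theorem wDbar_log_det_otCoeff (hz : ∀ i : Fin n, 0 < (z i.castSucc).im) (ℓ : Fin (n + 1)) :
    wDbar ℓ (fun w => Complex.log (of fun a b => otCoeff w a b).det) z =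
      ∑ i : Fin n, (if ℓ = i.castSucc then Complex.I / 2 else 0) *
        -(((z i.castSucc).im⁻¹ : ℝ) : ℂ) := by
  have hlog : ∀ i : Fin n, HasDerivAt (fun t : ℝ => -(Real.log t : ℂ))
      (-(((z i.castSucc).im⁻¹ : ℝ) : ℂ)) (z i.castSucc).im :=
    fun i => (Real.hasDerivAt_log (hz i).ne').ofReal_comp.neg
  have hev := (eventually_forall_im_pos hz).mono fun w hw => log_det_otCoeff hw
  rw [Filter.EventuallyEq.wDbar_eq hev, wDbar_const_add,
    wDbar_sum fun i _ => (hasFDerivAt_comp_im_apply _ (hlog i)).differentiableAt]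
  refine Finset.sum_congr rfl fun i _ => ?_
  rw [wDbar_comp_im _ (hlog i), ite_mul, zero_mul]

theorem alphaCoeff_eq_sum (k ℓ : Fin (n + 1)) :
    alphaCoeff z k ℓ =
      ∑ i : Fin n, if k = i.castSucc ∧ ℓ = i.castSucc then 1 / (4 * ((z i.castSucc).im : ℂ) ^ 2)
        else 0 := by
  induction k using Fin.lastCases with
  | last => simp [alphaCoeff, (Fin.castSucc_lt_last _).ne']
  | cast j =>
    simp [alphaCoeff, (Fin.castSucc_lt_last _).ne, Fin.castSucc_inj, ite_and, eq_comm (a := ℓ)]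

theorem wD_wDbar_log_det_otCoeff (hz : ∀ i : Fin n, 0 < (z i.castSucc).im) (k ℓ : Fin (n + 1)) :
    wD k (fun w => wDbar ℓ (fun v => Complex.log (of fun a b => otCoeff v a b).det) w) z =
      alphaCoeff z k ℓ := by
  have hinv : ∀ i : Fin n, HasDerivAt
      (fun t : ℝ => (if ℓ = i.castSucc then Complex.I / 2 else 0) * -((t⁻¹ : ℝ) : ℂ))
      ((if ℓ = i.castSucc then Complex.I / 2 else 0) *
        -((-((z i.castSucc).im ^ 2)⁻¹ : ℝ) : ℂ)) (z i.castSucc).im :=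
    fun i => ((hasDerivAt_inv (hz i).ne').ofReal_comp.neg).const_mul _
  have hev := (eventually_forall_im_pos hz).mono fun w hw => wDbar_log_det_otCoeff hw ℓ
  rw [Filter.EventuallyEq.wD_eq hev,
    wD_sum fun i _ => (hasFDerivAt_comp_im_apply _ (hinv i)).differentiableAt, alphaCoeff_eq_sum]
  refine Finset.sum_congr rfl fun i _ => ?_
  rw [wD_comp_im _ (hinv i)]
  split_ifs
  · push_cast
    linear_combination (-(1 / 4) * (((z i.castSucc).im : ℂ) ^ 2)⁻¹) * Complex.I_sq
  all_goals simp_all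

end OTMetric

theorem ot_metric_ricci_general (n : ℕ) :
    let logdet : (Fin (n + 1) → ℂ) → ℂ :=
      fun v => Complex.log (Matrix.det (Matrix.of fun a b => otCoeff v a b))
    ∀ z : Fin (n + 1) → ℂ, (∀ i : Fin n, 0 < (z i.castSucc).im) →
      ∀ k ℓ : Fin (n + 1),
        -(wD k (fun w => wDbar ℓ logdet w) z) = -(alphaCoeff z k ℓ) := by
  intro _ z hz k ℓ
  exact congrArg Neg.neg (wD_wDbar_log_det_otCoeff hz k ℓ)

/-- The Chern–Ricci form of `ω_OT = α + β + γ` is `Ric(ω_OT) = -i∂∂̄ log det g_OT = -α`,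
stated coefficientwise: `-∂_k∂_{\bar ℓ} log det g_OT = -α_{k\bar ℓ}` on `ℍ^n × ℂ`. -/
theorem ot_metric_ricci (n : ℕ) (hn : 1 ≤ n) :
    let logdet : (Fin (n + 1) → ℂ) → ℂ :=
      fun v => Complex.log (Matrix.det (Matrix.of fun a b => otCoeff v a b))
    ∀ z : Fin (n + 1) → ℂ, (∀ i : Fin n, 0 < (z i.castSucc).im) →
      ∀ k ℓ : Fin (n + 1),
        -(wD k (fun w => wDbar ℓ logdet w) z) = -(alphaCoeff z k ℓ) :=
  ot_metric_ricci_general n
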